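/- For n=1, the product measure P(σ_1,…,σ_L) = ∏_{i=1}^L μ_i^{-σ_i}(μ_i;q)_{σ_i}/(q;q)_{σ_i} satisfies the local ZF relation: for all α,β ∈ Z_{≥0}, g_α(μ)g_β(λ) = Σ_{0≤γ≤α} Φ_q(β|α+β-γ;λ,μ) g_γ(λ) g_{α+β-γ}(μ), where g_α(μ)=μ^{-α}(μ;q)_α/(q;q)_α and Φ_q is the n=1 weight function. -/

import Mathlib

open scoped BigOperators

noncomputable section

/-- The q-Pochhammer symbol `(z;q)_m = ∏_{j=0}^{m-1} (1 - z q^j)`. -/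
def qP (q z : ℝ) (m : ℕ) : ℝ := ∏ j ∈ Finset.range m, (1 - z * q ^ j)

/-- The q-binomial coefficient, zero outside `0 ≤ k ≤ m`. -/
def qBinom (q : ℝ) (m k : ℕ) : ℝ :=
  if k ≤ m then qP q q m / (qP q q k * qP q q (m - k)) else 0

/-- `g_α(μ) = μ^{-α}(μ;q)_α/(q;q)_α` for `n = 1`. -/
def g1 (q mu : ℝ) (a : ℕ) : ℝ := mu ^ (-(a : ℤ)) * qP q mu a / qP q q a

/-- The `n = 1` weight function
`Φ_q(γ|β;λ,μ) = (μ/λ)^γ (λ;q)_γ (μ/λ;q)_{β-γ}/(μ;q)_β · binom_q(β,γ)`. -/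
def Phi1 (q lam mu : ℝ) (γ β : ℕ) : ℝ :=
  (mu / lam) ^ γ * qP q lam γ * qP q (mu / lam) (β - γ) / qP q mu β *
    qBinom q β γ

/-!
Expanding `(μ;q)_α = (λ · μ/λ; q)_α` by the finite q-binomial theorem
`(ab;q)_n = ∑_k [n,k]_q b^k (a;q)_k (b;q)_{n-k}` writes `g_α(μ) g_β(λ)` as a sum over `γ ≤ α`.
Its `γ`-th summand agrees with `Φ_q(β|α+β-γ;λ,μ) g_γ(λ) g_{α+β-γ}(μ)` once the factor
`(μ;q)_{α+β-γ}` of `g_{α+β-γ}(μ)` cancels against the denominator of `Φ_q`.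
-/

lemma qP_zero (q z : ℝ) : qP q z 0 = 1 := by simp [qP]

lemma qP_succ (q z : ℝ) (m : ℕ) : qP q z (m + 1) = qP q z m * (1 - z * q ^ m) :=
  Finset.prod_range_succ _ _

lemma qP_self_pos {q : ℝ} (hq0 : 0 ≤ q) (hq1 : q < 1) (m : ℕ) : 0 < qP q q m :=
  Finset.prod_pos fun j _ => by
    rw [← pow_succ', sub_pos]
    exact pow_lt_one₀ hq0 hq1 j.succ_ne_zero

section qBinom

variable {q : ℝ}

lemma qBinom_add (k l : ℕ) :
    qBinom q (k + l) k = qP q q (k + l) / (qP q q k * qP q q l) := by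
  simp [qBinom]

lemma qBinom_of_lt {n k : ℕ} (h : n < k) : qBinom q n k = 0 := by
  simp [qBinom, h.not_ge]

variable (hq : ∀ m, qP q q m ≠ 0)
include hq

lemma qBinom_zero_right (n : ℕ) : qBinom q n 0 = 1 := by
  simp [qBinom, qP_zero, hq]

lemma qBinom_self (n : ℕ) : qBinom q n n = 1 := by
  simp [qBinom, qP_zero, hq]

/-- q-Pascal rule; with truncated subtraction it holds for every `k`, also `k ≥ n`. -/
lemma qBinom_succ_succ (n k : ℕ) :
    qBinom q (n + 1) (k + 1) = qBinom q n (k + 1) + q ^ (n - k) * qBinom q n k := by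
  rcases lt_trichotomy k n with hkn | rfl | hnk
  · obtain ⟨l, rfl⟩ : ∃ l, n = k + 1 + l := ⟨n - (k + 1), by omega⟩
    have e₁ : k + 1 + l + 1 = (k + 1) + (l + 1) := by omega
    have e₂ : k + 1 + l = k + (l + 1) := by omega
    have e₃ : k + 1 + l - k = l + 1 := by omega
    rw [e₁, qBinom_add, e₃, qBinom_add, e₂, qBinom_add, ← e₂, ← e₁,
      qP_succ q q (k + 1 + l), qP_succ q q k, qP_succ q q l]
    obtain ⟨hk, hk'⟩ := mul_ne_zero_iff.mp (qP_succ q q k ▸ hq (k + 1))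
    obtain ⟨hl, hl'⟩ := mul_ne_zero_iff.mp (qP_succ q q l ▸ hq (l + 1))
    have := hq (k + 1 + l)
    field_simp
    ring
  · rw [qBinom_self hq, qBinom_self hq, qBinom_of_lt (Nat.lt_succ_self k)]
    simp
  · rw [qBinom_of_lt (by omega), qBinom_of_lt (by omega), qBinom_of_lt hnk]
    simp

/-- Finite q-binomial theorem (q-Chu–Vandermonde). -/
theorem qP_mul_eq_sum (a b : ℝ) (n : ℕ) :
    qP q (a * b) n = ∑ k ∈ Finset.range (n + 1),
      qBinom q n k * b ^ k * qP q a k * qP q b (n - k) := by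
  induction n with
  | zero => simp [qP_zero, qBinom_zero_right hq]
  | succ n ih =>
    have hshift : ∑ k ∈ Finset.range (n + 1),
          qBinom q n (k + 1) * b ^ (k + 1) * qP q a (k + 1) * qP q b (n + 1 - (k + 1))
          + qP q b (n + 1)
        = ∑ k ∈ Finset.range (n + 1), qBinom q n k * b ^ k * qP q a k * qP q b (n + 1 - k) := by
      have htop : qBinom q n (n + 1) * b ^ (n + 1) * qP q a (n + 1) * qP q b (n + 1 - (n + 1))
          = 0 := by
        rw [qBinom_of_lt (Nat.lt_succ_self n)]
        ring
      rw [eq_comm, ← add_zero (∑ k ∈ Finset.range (n + 1), _), ← htop,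
        ← Finset.sum_range_succ (fun k => qBinom q n k * b ^ k * qP q a k * qP q b (n + 1 - k)),
        Finset.sum_range_succ', qBinom_zero_right hq]
      simp [qP_zero]
    rw [Finset.sum_range_succ', qBinom_zero_right hq]
    simp only [qBinom_succ_succ hq, add_mul, Finset.sum_add_distrib]
    rw [add_right_comm]
    simp only [pow_zero, qP_zero, mul_one, Nat.sub_zero, one_mul]
    rw [hshift, ← Finset.sum_add_distrib, qP_succ, ih, Finset.sum_mul]
    refine Finset.sum_congr rfl fun k hk => ?_
    have hkn : k ≤ n := Nat.lt_succ_iff.mp (Finset.mem_range.mp hk)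
    have hpow : q ^ (n - k) * q ^ k = q ^ n := by rw [← pow_add, Nat.sub_add_cancel hkn]
    rw [Nat.succ_sub_succ, show n + 1 - k = n - k + 1 by omega, qP_succ q b, qP_succ q a]
    -- `(1 - b q^{n-k}) + b q^{n-k} (1 - a q^k) = 1 - ab q^n`
    linear_combination a * b * qBinom q n k * b ^ k * qP q a k * qP q b (n - k) * hpow

end qBinom

lemma g1_eq_div (q mu : ℝ) (a : ℕ) : g1 q mu a = qP q mu a / (mu ^ a * qP q q a) := by
  rw [g1, zpow_neg, zpow_natCast]
  ring

lemma Phi1_mul_g1_mul_g1 {q lam mu : ℝ} (hq : ∀ m, qP q q m ≠ 0) (hlam : lam ≠ 0)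
    (hmu : mu ≠ 0) (β γ d : ℕ) (hP : qP q mu (β + d) ≠ 0) :
    Phi1 q lam mu β (β + d) * g1 q lam γ * g1 q mu (β + d)
      = qBinom q (γ + d) γ * (mu / lam) ^ γ * qP q lam γ * qP q (mu / lam) d
          / (mu ^ (γ + d) * qP q q (γ + d)) * g1 q lam β := by
  rw [Phi1, Nat.add_sub_cancel_left, add_comm β d, qBinom_add, add_comm d β, qBinom_add,
    g1_eq_div, g1_eq_div, g1_eq_div, div_pow, div_pow]
  have := hq β; have := hq γ; have := hq d; have := hq (β + d); have := hq (γ + d)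
  field_simp
  ring

/-- For `n = 1`, the product measure
`P(σ₁,…,σ_L) = ∏_i μ_i^{-σ_i}(μ_i;q)_{σ_i}/(q;q)_{σ_i} = ∏_i g_{σ_i}(μ_i)`
satisfies the local ZF relation: for all `α,β ∈ Z_{≥0}`,
`g_α(μ) g_β(λ) = ∑_{0≤γ≤α} Φ_q(β|α+β-γ;λ,μ) g_γ(λ) g_{α+β-γ}(μ)`. -/
theorem zf_relation_n1 (q lam mu : ℝ) (hq0 : 0 < q) (hq1 : q < 1)
    (hlam : lam ≠ 0) (hmu : mu ≠ 0) (α β : ℕ)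
    (hP : ∀ m, m ≤ α + β → qP q mu m ≠ 0) :
    g1 q mu α * g1 q lam β
      = ∑ γ ∈ Finset.range (α + 1),
          Phi1 q lam mu β (α + β - γ) * g1 q lam γ * g1 q mu (α + β - γ) := by
  have hq : ∀ m, qP q q m ≠ 0 := fun m => (qP_self_pos hq0.le hq1 m).ne'
  have hexpand := qP_mul_eq_sum hq lam (mu / lam) α
  rw [mul_div_cancel₀ mu hlam] at hexpand
  rw [g1_eq_div q mu α, hexpand, Finset.sum_div, Finset.sum_mul]
  refine Finset.sum_congr rfl fun γ hγ => ?_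
  obtain ⟨d, rfl⟩ : ∃ d, α = γ + d :=
    ⟨α - γ, (Nat.add_sub_cancel' (Nat.lt_succ_iff.mp (Finset.mem_range.mp hγ))).symm⟩
  rw [show γ + d + β - γ = β + d by omega, Nat.add_sub_cancel_left,
    Phi1_mul_g1_mul_g1 hq hlam hmu β γ d (hP _ (by omega))]
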